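/- arXiv:2209.12887 — 4 statements merged into one kernel-verified Lean document; each statement's English description precedes it below -/
import Mathlib

section
/- Let H be a d-dimensional complex inner product space with orthonormal basis {π₁, …, π_d}, let Π be the orthogonal projection onto the span of {π₁, …, π_{d_g}} for some 1 ≤ d_g ≤ d, let U be a d×d unitary matrix, set x_j = Σ_{α=1}^{d} U_{α j} π_α for each j, and let ψ = (1/√d) Σ_{j=1}^{d} x_j ⊗ x_j in the inner product space H ⊗ H. Then there exist a unit vector ψ_g and a vector φ⊥ in H ⊗ H such that ψ = √(d_g/d) · ψ_g + φ⊥, (Π ⊗ id)(ψ_g) = ψ_g, (Π ⊗ id)(φ⊥) = 0, and ⟨ψ_g, φ⊥⟩ = 0; in particular ‖(Π ⊗ id)ψ‖² = d_g/d and Π ⊗ id acts as the rank-one projector |ψ_g⟩⟨ψ_g| on the two-dimensional subspace spanned by ψ_g and φ⊥. -/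
/-!
The coefficient matrix of `ψ` is `U Uᵀ / √d`, and `U Uᵀ` is again unitary, so every row of `ψ`
has squared norm `1 / d`; keeping the first `d_g` rows leaves squared norm `d_g / d`.
Everything else holds for any symmetric idempotent `P` with `P ψ ≠ 0`: take `ψ_g` the
normalisation of `P ψ` and `φ⊥ = ψ - P ψ`, which `P` kills and which is orthogonal to the
range of `P`.
-/

open scoped InnerProductSpace

section

variable {𝕜 E : Type*} [RCLike 𝕜] [NormedAddCommGroup E] [InnerProductSpace 𝕜 E]

theorem LinearMap.apply_smul_add_smul_eq_inner_smul {P : E →ₗ[𝕜] E} {u w : E}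
    (hu : ‖u‖ = 1) (hPu : P u = u) (hPw : P w = 0) (huw : ⟪u, w⟫_𝕜 = 0) (a b : 𝕜) :
    P (a • u + b • w) = ⟪u, a • u + b • w⟫_𝕜 • u := by
  rw [map_add, map_smul, map_smul, hPu, hPw, smul_zero, add_zero, inner_add_right,
    inner_smul_right, inner_smul_right, huw, mul_zero, add_zero,
    inner_self_eq_one_of_norm_eq_one hu, mul_one]

namespace LinearMap.IsSymmetricProjection

variable {P : E →ₗ[𝕜] E} (hP : P.IsSymmetricProjection)
include hP

theorem apply_apply (v : E) : P (P v) = P v :=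
  LinearMap.congr_fun hP.isIdempotentElem.eq v

theorem apply_sub_apply_self (v : E) : P (v - P v) = 0 := by
  rw [map_sub, hP.apply_apply, sub_self]

theorem inner_apply_sub_apply_self (v w : E) : ⟪P v, w - P w⟫_𝕜 = 0 := by
  rw [hP.isSymmetric, hP.apply_sub_apply_self, inner_zero_right]

theorem exists_eq_norm_smul_add {ψ : E} (hψ : P ψ ≠ 0) :
    ∃ ψg φ : E, ‖ψg‖ = 1 ∧ ψ = (‖P ψ‖ : 𝕜) • ψg + φ ∧ P ψg = ψg ∧ P φ = 0 ∧ ⟪ψg, φ⟫_𝕜 = 0 := by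
  have hnorm : (‖P ψ‖ : 𝕜) ≠ 0 := RCLike.ofReal_ne_zero.mpr (norm_ne_zero_iff.mpr hψ)
  refine ⟨(‖P ψ‖⁻¹ : 𝕜) • P ψ, ψ - P ψ, norm_smul_inv_norm hψ, ?_, ?_,
    hP.apply_sub_apply_self ψ, ?_⟩
  · rw [smul_smul, mul_inv_cancel₀ hnorm, one_smul, add_sub_cancel]
  · rw [map_smul, hP.apply_apply]
  · rw [inner_smul_left, hP.inner_apply_sub_apply_self, mul_zero]

end LinearMap.IsSymmetricProjection

theorem EuclideanSpace.isSymmetricProjection_of_apply_eq_ite {ι : Type*} [Fintype ι]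
    (p : ι → Prop) [DecidablePred p] (P : EuclideanSpace 𝕜 ι →ₗ[𝕜] EuclideanSpace 𝕜 ι)
    (hP : ∀ v i, P v i = if p i then v i else 0) : P.IsSymmetricProjection where
  isIdempotentElem := LinearMap.ext fun v => PiLp.ext fun i => by
    simp only [Module.End.mul_apply, hP]
    split_ifs <;> rfl
  isSymmetric v w := by
    simp only [PiLp.inner_apply, hP]
    refine Finset.sum_congr rfl fun i _ => ?_
    split_ifs <;> simp

theorem EuclideanSpace.norm_sq_eq_sum_of_apply_eq_ite {ι κ : Type*} [Fintype ι] [Fintype κ]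
    (p : ι → Prop) [DecidablePred p] (P : EuclideanSpace 𝕜 (ι × κ) →ₗ[𝕜] EuclideanSpace 𝕜 (ι × κ))
    (hP : ∀ v q, P v q = if p q.1 then v q else 0) (v : EuclideanSpace 𝕜 (ι × κ)) :
    ‖P v‖ ^ 2 = ∑ i with p i, ∑ j, ‖v (i, j)‖ ^ 2 := by
  rw [EuclideanSpace.norm_sq_eq, Fintype.sum_prod_type, Finset.sum_filter]
  refine Finset.sum_congr rfl fun i _ => ?_
  split_ifs with h <;> simp [hP, h]

theorem Matrix.sum_norm_sq_row_of_mem_unitaryGroup {n : Type*} [Fintype n] [DecidableEq n]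
    {U : Matrix n n 𝕜} (hU : U ∈ Matrix.unitaryGroup n 𝕜) (i : n) :
    ∑ j, ‖U i j‖ ^ 2 = 1 := by
  have h : (U * U.conjTranspose) i i = 1 := by
    rw [← Matrix.star_eq_conjTranspose, Matrix.mem_unitaryGroup_iff.mp hU, Matrix.one_apply_eq]
  simp only [Matrix.mul_apply, Matrix.conjTranspose_apply, ← starRingEnd_apply,
    RCLike.mul_conj] at h
  exact_mod_cast h

theorem Matrix.mul_transpose_mem_unitaryGroup {n : Type*} [Fintype n] [DecidableEq n]
    {U : Matrix n n 𝕜} (hU : U ∈ Matrix.unitaryGroup n 𝕜) :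
    U * U.transpose ∈ Matrix.unitaryGroup n 𝕜 :=
  Submonoid.mul_mem _ hU (Matrix.transpose_mem_unitaryGroup_iff.mpr hU)

end

theorem purification_of_maximally_mixed_state_general
    (d dg : ℕ) (hdg1 : 1 ≤ dg) (hdgd : dg ≤ d)
    (U : Matrix (Fin d) (Fin d) ℂ) (hU : U ∈ Matrix.unitaryGroup (Fin d) ℂ)
    (ψ : EuclideanSpace ℂ (Fin d × Fin d))
    (hψ : ∀ p : Fin d × Fin d,
      ψ p = ((1 / Real.sqrt d : ℝ) : ℂ) * ∑ j : Fin d, U p.1 j * U p.2 j)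
    (Pid : EuclideanSpace ℂ (Fin d × Fin d) →ₗ[ℂ] EuclideanSpace ℂ (Fin d × Fin d))
    (hPid : ∀ (v : EuclideanSpace ℂ (Fin d × Fin d)) (p : Fin d × Fin d),
      Pid v p = if (p.1 : ℕ) < dg then v p else 0) :
    ∃ ψg φperp : EuclideanSpace ℂ (Fin d × Fin d),
      ‖ψg‖ = 1 ∧
      ψ = ((Real.sqrt ((dg : ℝ) / d) : ℝ) : ℂ) • ψg + φperp ∧
      Pid ψg = ψg ∧
      Pid φperp = 0 ∧
      (inner ℂ ψg φperp : ℂ) = 0 ∧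
      ‖Pid ψ‖ ^ 2 = (dg : ℝ) / d ∧
      (∀ a b : ℂ, Pid (a • ψg + b • φperp)
          = (inner ℂ ψg (a • ψg + b • φperp) : ℂ) • ψg) := by
  have hrow (α : Fin d) : ∑ β, ‖ψ (α, β)‖ ^ 2 = 1 / d := by
    have hM := Matrix.sum_norm_sq_row_of_mem_unitaryGroup
      (Matrix.mul_transpose_mem_unitaryGroup hU) α
    simp only [Matrix.mul_apply, Matrix.transpose_apply] at hM
    simp only [hψ, norm_mul, mul_pow, ← Finset.mul_sum, hM, Complex.norm_real]
    simp
  have hnorm : ‖Pid ψ‖ ^ 2 = dg / d := by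
    rw [EuclideanSpace.norm_sq_eq_sum_of_apply_eq_ite (fun α : Fin d ↦ (α : ℕ) < dg) Pid hPid,
      Finset.sum_congr rfl fun α _ => hrow α, Finset.sum_const, Fin.card_filter_val_lt,
      min_eq_right hdgd, nsmul_eq_mul, mul_one_div]
  have hPψ : Pid ψ ≠ 0 := by
    intro h
    simp only [h, norm_zero, ne_eq, OfNat.ofNat_ne_zero, not_false_eq_true, zero_pow,
      eq_comm (a := (0 : ℝ)), div_eq_zero_iff, Nat.cast_eq_zero] at hnorm
    omega
  obtain ⟨ψg, φ, hψg, hψ_eq, hPψg, hPφ, horth⟩ :=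
    (EuclideanSpace.isSymmetricProjection_of_apply_eq_ite _ Pid hPid).exists_eq_norm_smul_add hPψ
  rw [← Real.sqrt_sq (norm_nonneg (Pid ψ)), hnorm] at hψ_eq
  exact ⟨ψg, φ, hψg, hψ_eq, hPψg, hPφ, horth, hnorm,
    LinearMap.apply_smul_add_smul_eq_inner_smul hψg hPψg hPφ horth⟩

/-- **purification lemma.** Working in coordinates with respect to the
orthonormal basis `{π_α}` of the `d`-dimensional space `H` (so that `H ⊗ H` is identified
with `EuclideanSpace ℂ (Fin d × Fin d)` via the orthonormal basis `{π_α ⊗ π_β}`): let `Π`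
be the orthogonal projection onto the span of the first `d_g` basis vectors (so `Π ⊗ id`
zeroes the coordinates `(α, β)` with `α ≥ d_g`), let `U` be a `d × d` unitary, let
`x_j = ∑_α U_{α j} π_α` and `ψ = (1/√d) ∑_j x_j ⊗ x_j`, i.e.
`ψ (α, β) = (1/√d) ∑_j U_{α j} U_{β j}`. Then there are `ψ_g`, `φ⊥` with `‖ψ_g‖ = 1`,
`ψ = √(d_g/d) • ψ_g + φ⊥`, `(Π ⊗ id) ψ_g = ψ_g`, `(Π ⊗ id) φ⊥ = 0`, `⟨ψ_g, φ⊥⟩ = 0`;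
in particular `‖(Π ⊗ id) ψ‖² = d_g/d` and `Π ⊗ id` acts as the rank-one projector
`|ψ_g⟩⟨ψ_g|` on the span of `ψ_g` and `φ⊥`. -/
theorem purification_of_maximally_mixed_state
    (d dg : ℕ) (hd : 0 < d) (hdg1 : 1 ≤ dg) (hdgd : dg ≤ d)
    (U : Matrix (Fin d) (Fin d) ℂ) (hU : U ∈ Matrix.unitaryGroup (Fin d) ℂ)
    (ψ : EuclideanSpace ℂ (Fin d × Fin d))
    (hψ : ∀ p : Fin d × Fin d,
      ψ p = ((1 / Real.sqrt d : ℝ) : ℂ) * ∑ j : Fin d, U p.1 j * U p.2 j)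
    (Pid : EuclideanSpace ℂ (Fin d × Fin d) →ₗ[ℂ] EuclideanSpace ℂ (Fin d × Fin d))
    (hPid : ∀ (v : EuclideanSpace ℂ (Fin d × Fin d)) (p : Fin d × Fin d),
      Pid v p = if (p.1 : ℕ) < dg then v p else 0) :
    ∃ ψg φperp : EuclideanSpace ℂ (Fin d × Fin d),
      ‖ψg‖ = 1 ∧
      ψ = ((Real.sqrt ((dg : ℝ) / d) : ℝ) : ℂ) • ψg + φperp ∧
      Pid ψg = ψg ∧
      Pid φperp = 0 ∧
      (inner ℂ ψg φperp : ℂ) = 0 ∧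
      ‖Pid ψ‖ ^ 2 = (dg : ℝ) / d ∧
      (∀ a b : ℂ, Pid (a • ψg + b • φperp)
          = (inner ℂ ψg (a • ψg + b • φperp) : ℂ) • ψg) :=
  purification_of_maximally_mixed_state_general d dg hdg1 hdgd U hU ψ hψ Pid hPid
end

section
/- Let A, B, C be finite-dimensional complex inner product spaces and let g : A → B and f : B → C be linear maps with f ∘ g = 0. Define the Laplacian Δ = g ∘ g† + f† ∘ f : B → B, where † denotes the adjoint. Then dim ker(Δ) = dim ker(f) − dim range(g). -/
/-!
Since `⟪Δ x, x⟫ = ‖g† x‖² + ‖f x‖²`, we get `ker Δ = ker g† ⊓ ker f = (range g)ᗮ ⊓ ker f`.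
As `f ∘ g = 0` gives `range g ≤ ker f`, this is the orthogonal complement of `range g`
inside `ker f`, whose dimension is `dim ker f − dim range g`.
-/

open Module LinearMap

namespace LinearMap

variable {𝕜 A B C : Type*} [RCLike 𝕜]
  [NormedAddCommGroup A] [InnerProductSpace 𝕜 A] [FiniteDimensional 𝕜 A]
  [NormedAddCommGroup B] [InnerProductSpace 𝕜 B] [FiniteDimensional 𝕜 B]
  [NormedAddCommGroup C] [InnerProductSpace 𝕜 C] [FiniteDimensional 𝕜 C]

noncomputable abbrev laplacian (g : A →ₗ[𝕜] B) (f : B →ₗ[𝕜] C) : B →ₗ[𝕜] B :=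
  g ∘ₗ g.adjoint + f.adjoint ∘ₗ f

lemma re_inner_laplacian_apply_self (g : A →ₗ[𝕜] B) (f : B →ₗ[𝕜] C) (x : B) :
    RCLike.re (inner 𝕜 (laplacian g f x) x) = ‖g.adjoint x‖ ^ 2 + ‖f x‖ ^ 2 := by
  rw [add_apply, inner_add_left, comp_apply, comp_apply, ← adjoint_inner_right g,
    adjoint_inner_left f, map_add, inner_self_eq_norm_sq, inner_self_eq_norm_sq]

lemma ker_laplacian (g : A →ₗ[𝕜] B) (f : B →ₗ[𝕜] C) :
    ker (laplacian g f) = ker g.adjoint ⊓ ker f := by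
  refine le_antisymm (fun x hx => ?_) (fun x ⟨hg, hf⟩ => ?_)
  · have hsum : ‖g.adjoint x‖ ^ 2 + ‖f x‖ ^ 2 = 0 := by
      rw [← re_inner_laplacian_apply_self, mem_ker.mp hx, inner_zero_left, map_zero]
    obtain ⟨hg, hf⟩ := (add_eq_zero_iff_of_nonneg (by positivity) (by positivity)).mp hsum
    exact ⟨by simpa using hg, by simpa using hf⟩
  · simp [mem_ker.mp hg, mem_ker.mp hf]

lemma finrank_range_add_finrank_ker_laplacian {g : A →ₗ[𝕜] B} {f : B →ₗ[𝕜] C}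
    (hfg : f ∘ₗ g = 0) :
    finrank 𝕜 (range g) + finrank 𝕜 (ker (laplacian g f)) = finrank 𝕜 (ker f) := by
  rw [ker_laplacian, ← orthogonal_range]
  exact Submodule.finrank_add_inf_finrank_orthogonal (range_le_ker_iff.mpr hfg)

end LinearMap

/-- **Hodge-theoretic identity for the Laplacian.** For linear maps
`g : A → B`, `f : B → C` between finite-dimensional complex inner product spaces with
`f ∘ g = 0`, the Laplacian `Δ = g ∘ g† + f† ∘ f : B → B` satisfies
`dim ker Δ = dim ker f − dim range g`. -/
theorem finrank_ker_laplacian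
    {A B C : Type*}
    [NormedAddCommGroup A] [InnerProductSpace ℂ A] [FiniteDimensional ℂ A]
    [NormedAddCommGroup B] [InnerProductSpace ℂ B] [FiniteDimensional ℂ B]
    [NormedAddCommGroup C] [InnerProductSpace ℂ C] [FiniteDimensional ℂ C]
    (g : A →ₗ[ℂ] B) (f : B →ₗ[ℂ] C) (hfg : f ∘ₗ g = 0) :
    Module.finrank ℂ
        (LinearMap.ker (g ∘ₗ LinearMap.adjoint g + LinearMap.adjoint f ∘ₗ f))
      = Module.finrank ℂ (LinearMap.ker f) - Module.finrank ℂ (LinearMap.range g) :=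
  Nat.eq_sub_of_add_eq' (finrank_range_add_finrank_ker_laplacian hfg)
end

section
/- For all natural numbers k and N with N ≥ k + 1, one has (∏_{l=0}^{k} (N − l)) · (k+1)^{k+1} ≥ N^{k+1} · (k+1)!. Equivalently, the fraction of (k+1)-tuples of indices from {1,…,N} having pairwise distinct entries, namely ∏_{l=0}^{k} (N − l) / N^{k+1}, is at least (k+1)!/(k+1)^{k+1}. -/
/-! For `l < n ≤ N` one has `l / N ≤ l / n`, i.e. `(N - l) / N ≥ (n - l) / n`: each factor of the
falling factorial `N (N - 1) ⋯ (N - n + 1)` loses relatively less against `N` than the matching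
factor of `n !` loses against `n`. Multiplying these `n` inequalities gives
`N.descFactorial n / N ^ n ≥ n ! / n ^ n`. -/

open Finset

namespace Nat

theorem mul_sub_le_sub_mul {a b : ℕ} (l : ℕ) (hab : a ≤ b) : b * (a - l) ≤ (b - l) * a := by
  rw [Nat.mul_sub, Nat.sub_mul, Nat.mul_comm b a, Nat.mul_comm b l]
  exact Nat.sub_le_sub_left (Nat.mul_le_mul_left l hab) _

theorem pow_mul_factorial_le_descFactorial_mul_pow {n N : ℕ} (h : n ≤ N) :
    N ^ n * n ! ≤ N.descFactorial n * n ^ n := by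
  have hfactors := prod_le_prod' fun l (_ : l ∈ range n) => mul_sub_le_sub_mul l h
  rwa [prod_mul_distrib, prod_mul_distrib, prod_const, prod_const, card_range,
    ← descFactorial_eq_prod_range, ← descFactorial_eq_prod_range, descFactorial_self] at hfactors

theorem factorial_div_pow_le_descFactorial_div_pow {K : Type*} [Field K] [LinearOrder K]
    [IsStrictOrderedRing K] {n N : ℕ} (h : n ≤ N) :
    (n ! : K) / (n : K) ^ n ≤ (N.descFactorial n : K) / (N : K) ^ n := by
  obtain rfl | hn := n.eq_zero_or_pos
  · simp
  have hN : 0 < N := hn.trans_le h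
  rw [div_le_div_iff₀ (by positivity) (by positivity)]
  exact_mod_cast (Nat.mul_comm _ _).trans_le (pow_mul_factorial_le_descFactorial_mul_pow h)

end Nat

/-- For natural numbers `k`, `N` with `N ≥ k + 1`,
`(∏_{l=0}^{k} (N − l)) · (k+1)^{k+1} ≥ N^{k+1} · (k+1)!`; equivalently, the fraction of
`(k+1)`-tuples from `{1,…,N}` with pairwise distinct entries,
`∏_{l=0}^{k} (N − l) / N^{k+1}`, is at least `(k+1)!/(k+1)^{k+1}`. -/
theorem distinct_tuple_fraction_lower_bound
    (k N : ℕ) (h : k + 1 ≤ N) :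
    N ^ (k + 1) * Nat.factorial (k + 1)
        ≤ (∏ l ∈ Finset.range (k + 1), (N - l)) * (k + 1) ^ (k + 1) ∧
      (Nat.factorial (k + 1) : ℝ) / (k + 1 : ℝ) ^ (k + 1)
        ≤ (∏ l ∈ Finset.range (k + 1), ((N : ℝ) - l)) / (N : ℝ) ^ (k + 1) := by
  rw [← Nat.descFactorial_eq_prod_range, ← descPochhammer_eval_eq_prod_range,
    descPochhammer_eval_eq_descFactorial]
  refine ⟨Nat.pow_mul_factorial_le_descFactorial_mul_pow h, ?_⟩
  exact_mod_cast Nat.factorial_div_pow_le_descFactorial_div_pow h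
end

section
/- Consider the real vector space ℝ⁶ with coordinates indexed by the edges (AB, BC, CD, AD, AX, BX) and ℝ⁵ with coordinates indexed by the vertices (A, B, C, D, X). Let ∂₁ : ℝ⁶ → ℝ⁵ be the linear map sending the edge basis vectors AB ↦ B − A, BC ↦ C − B, CD ↦ D − C, AD ↦ D − A, AX ↦ X − A, BX ↦ X − B, and let ∂₂ : ℝ → ℝ⁶ be the linear map sending the triangle basis vector ABX ↦ AB − AX + BX, i.e. to the vector (1, 0, 0, 0, −1, 1). Then the kernel of the combinatorial Laplacian Δ₁ = ∂₂ ∘ ∂₂ᵀ + ∂₁ᵀ ∘ ∂₁ : ℝ⁶ → ℝ⁶ is one-dimensional and is spanned by the vector v = (2, 3, 3, −3, 1, −1), i.e. by 3·(AB + BC + CD − AD) − ∂₂(ABX). -/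
/-! Over an ordered field, `xᵀ (A Aᵀ + Bᵀ B) x = |Aᵀ x|² + |B x|²`, so the kernel of a
combinatorial Laplacian `∂₂ ∂₂ᵀ + ∂₁ᵀ ∂₁` consists of the harmonic chains: the cycles
(`∂₁ x = 0`) that are also cocycles (`∂₂ᵀ x = 0`). For the complex at hand these are six linear
equations in six unknowns whose solutions form the line through `(2, 3, 3, -3, 1, -1)`. -/

open Matrix

theorem Matrix.dotProduct_self_nonneg {n R : Type*} [Fintype n] [Ring R] [LinearOrder R]
    [IsStrictOrderedRing R] (v : n → R) : 0 ≤ v ⬝ᵥ v :=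
  Fintype.sum_nonneg fun i => mul_self_nonneg (v i)

theorem Matrix.ker_mulVecLin_mul_transpose_add_transpose_mul {m n k R : Type*}
    [Fintype m] [Fintype n] [Fintype k] [Field R] [LinearOrder R] [IsStrictOrderedRing R]
    (A : Matrix n k R) (B : Matrix m n R) :
    LinearMap.ker (A * Aᵀ + Bᵀ * B).mulVecLin =
      LinearMap.ker Aᵀ.mulVecLin ⊓ LinearMap.ker B.mulVecLin := by
  ext x
  simp only [Submodule.mem_inf, LinearMap.mem_ker, mulVecLin_apply]
  constructor
  · intro h
    have hsum : Aᵀ *ᵥ x ⬝ᵥ Aᵀ *ᵥ x + B *ᵥ x ⬝ᵥ B *ᵥ x = 0 := by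
      have := congr_arg (dotProduct x) h
      rwa [add_mulVec, dotProduct_add, ← mulVec_mulVec, ← mulVec_mulVec, dotProduct_mulVec,
        dotProduct_mulVec x Bᵀ, vecMul_transpose, ← mulVec_transpose, dotProduct_zero] at this
    rwa [add_eq_zero_iff_of_nonneg (dotProduct_self_nonneg _) (dotProduct_self_nonneg _),
      dotProduct_self_eq_zero, dotProduct_self_eq_zero] at hsum
  · rintro ⟨hA, hB⟩
    rw [add_mulVec, ← mulVec_mulVec, ← mulVec_mulVec, hA, hB, mulVec_zero, mulVec_zero, add_zero]

def boundary₁ : Matrix (Fin 5) (Fin 6) ℝ :=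
  !![-1, 0, 0, -1, -1, 0;
      1, -1, 0, 0, 0, -1;
      0, 1, -1, 0, 0, 0;
      0, 0, 1, 1, 0, 0;
      0, 0, 0, 0, 1, 1]

def boundary₂ : Matrix (Fin 6) (Fin 1) ℝ :=
  !![1; 0; 0; 0; -1; 1]

def harmonicCycle : Fin 6 → ℝ :=
  ![2, 3, 3, -3, 1, -1]

theorem boundary₁_mulVec (x : Fin 6 → ℝ) :
    boundary₁ *ᵥ x = ![-x 0 - x 3 - x 4, x 0 - x 1 - x 5, x 1 - x 2, x 2 + x 3, x 4 + x 5] := by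
  ext i
  fin_cases i <;> simp [boundary₁, mulVec, dotProduct, Fin.sum_univ_succ] <;> ring

theorem boundary₂_transpose_mulVec (x : Fin 6 → ℝ) : boundary₂ᵀ *ᵥ x = ![x 0 - x 4 + x 5] := by
  ext i
  fin_cases i
  simp [boundary₂, mulVec, dotProduct, Fin.sum_univ_succ]
  ring

theorem ker_boundary₂_transpose_inf_ker_boundary₁ :
    LinearMap.ker boundary₂ᵀ.mulVecLin ⊓ LinearMap.ker boundary₁.mulVecLin =
      Submodule.span ℝ {harmonicCycle} := by
  ext x
  simp only [Submodule.mem_inf, LinearMap.mem_ker, mulVecLin_apply, boundary₁_mulVec,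
    boundary₂_transpose_mulVec, Submodule.mem_span_singleton, harmonicCycle]
  constructor
  · simp only [cons_eq_zero_iff, zero_empty, and_true]
    rintro ⟨hABX, hA, hB, hC, hD, hX⟩
    refine ⟨x 4, funext fun i => ?_⟩
    fin_cases i <;> simp <;> linarith
  · rintro ⟨c, rfl⟩
    constructor <;> ext i <;> fin_cases i <;> simp <;> ring

/-- With edges ordered `(AB, BC, CD, AD, AX, BX)` and vertices
`(A, B, C, D, X)`, let `∂₁ : ℝ⁶ → ℝ⁵` be the boundary map `AB ↦ B − A`, `BC ↦ C − B`,
`CD ↦ D − C`, `AD ↦ D − A`, `AX ↦ X − A`, `BX ↦ X − B` and `∂₂ : ℝ → ℝ⁶` the map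
`ABX ↦ AB − AX + BX = (1,0,0,0,−1,1)`. The kernel of the combinatorial Laplacian
`Δ₁ = ∂₂ ∘ ∂₂ᵀ + ∂₁ᵀ ∘ ∂₁` is one-dimensional, spanned by
`v = (2,3,3,−3,1,−1) = 3(AB + BC + CD − AD) − ∂₂(ABX)`. -/
theorem kernel_of_combinatorial_laplacian_example
    (D1 : Matrix (Fin 5) (Fin 6) ℝ) (D2 : Matrix (Fin 6) (Fin 1) ℝ)
    (hD1 : D1 = !![-1, 0, 0, -1, -1, 0;
                    1, -1, 0, 0, 0, -1;
                    0, 1, -1, 0, 0, 0;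
                    0, 0, 1, 1, 0, 0;
                    0, 0, 0, 0, 1, 1])
    (hD2 : D2 = !![1; 0; 0; 0; -1; 1]) :
    LinearMap.ker (D2 * D2.transpose + D1.transpose * D1).mulVecLin
        = Submodule.span ℝ {![2, 3, 3, -3, 1, -1]} ∧
      Module.finrank ℝ
          (LinearMap.ker (D2 * D2.transpose + D1.transpose * D1).mulVecLin) = 1 := by
  have hker : LinearMap.ker (D2 * D2.transpose + D1.transpose * D1).mulVecLin =
      Submodule.span ℝ {harmonicCycle} := by
    subst hD1 hD2
    exact (ker_mulVecLin_mul_transpose_add_transpose_mul boundary₂ boundary₁).trans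
      ker_boundary₂_transpose_inf_ker_boundary₁
  refine ⟨hker, ?_⟩
  rw [hker, finrank_span_singleton]
  intro h
  simpa [harmonicCycle] using congr_fun h 0
end
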